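/- Let K be an infinite compact Hausdorff space and let S be an infinite scattered compact Hausdorff space. Then C_w(K) and C_p(S) are not homeomorphic. -/

import Mathlib

/-!
For infinite compact `K`, take continuous bumps `fₙ : K → [0, 1]` with pairwise disjoint
supports and `fₙ (yₙ) = 1`. Every functional sends `fₙ` to a summable sequence, so `fₙ → 0`
weakly; hence `fₙ + n • fₘ → fₙ` as `m → ∞`, and `0` lies in the weak closure of the countable
set `A = {fₙ + n • fₘ | n < m}`. But no sequence in `A` converges weakly to `0`: by
Banach–Steinhaus it would be norm bounded, which bounds `n` (evaluate at `yₘ`), so some `n₀`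
recurs infinitely often and evaluation at `y n₀` stays equal to `1`.

This cannot happen in `C_p(S)` for compact scattered `S`. Given a countable `B ∪ {g}`, the map
`S → ℝ^(B ∪ {g})` has countable range, because a continuous image of a compact scattered space
contains no nonempty perfect set (take a minimal closed set with the same image: its isolated
point maps to an isolated point). So pointwise convergence on `B ∪ {g}` is convergence at
countably many points, which is first countable.
-/

/-- A topological space is scattered if every nonempty subset `S` contains a point
isolated in `S`. -/
def Scattered (X : Type*) [TopologicalSpace X] : Prop :=
  ∀ S : Set X, S.Nonempty → ∃ x ∈ S, ∃ U : Set X, IsOpen U ∧ U ∩ S = {x}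

/-- The weak topology on `C(K, ℝ)`: the coarsest topology making all continuous linear
functionals on the Banach space `C(K)` continuous. -/
noncomputable def weakTopology (K : Type*) [TopologicalSpace K] [CompactSpace K] :
    TopologicalSpace C(K, ℝ) :=
  ⨅ μ : C(K, ℝ) →L[ℝ] ℝ, TopologicalSpace.induced μ inferInstance

/-- The topology of pointwise convergence on `C(K, ℝ)`. -/
noncomputable def pointwiseTopology (K : Type*) [TopologicalSpace K] :
    TopologicalSpace C(K, ℝ) :=
  TopologicalSpace.induced (fun f : C(K, ℝ) => (f : K → ℝ)) Pi.topologicalSpace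

open Filter Function Topology Set

def FrechetUrysohnOnCountableSets {X : Type*} (t : TopologicalSpace X) : Prop :=
  ∀ s : Set X, s.Countable → closure[t] s ⊆ @seqClosure X t s

theorem FrechetUrysohnOnCountableSets.of_homeomorph {X Y : Type*} [tX : TopologicalSpace X]
    [tY : TopologicalSpace Y] (e : X ≃ₜ Y) (h : FrechetUrysohnOnCountableSets tY) :
    FrechetUrysohnOnCountableSets tX := by
  intro s hs x hx
  obtain ⟨u, hu, hux⟩ := h (e '' s) (hs.image e) (e.image_closure s ▸ mem_image_of_mem e hx)
  refine ⟨e.symm ∘ u, fun k => ?_, by simpa using (e.symm.continuous.tendsto _).comp hux⟩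
  obtain ⟨y, hy, hyu⟩ := hu k
  simpa [← hyu] using hy

theorem Set.Finite.exists_frequently_eq {ι β : Type*} {l : Filter ι} [l.NeBot] {f : ι → β}
    {s : Set β} (hs : s.Finite) (hf : ∀ i, f i ∈ s) : ∃ b, ∃ᶠ i in l, f i = b := by
  by_contra! h
  obtain ⟨i, hi⟩ := ((eventually_all_finite hs).2 fun b _ => h b).exists
  exact hi (f i) (hf i) rfl

theorem exists_norm_le_of_forall_bddAbove_dual {𝕜 E ι : Type*} [RCLike 𝕜]
    [NormedAddCommGroup E] [NormedSpace 𝕜 E] {a : ι → E}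
    (h : ∀ μ : StrongDual 𝕜 E, BddAbove (range fun i => ‖μ (a i)‖)) : ∃ C, ∀ i, ‖a i‖ ≤ C := by
  obtain ⟨C, hC⟩ := banach_steinhaus (g := fun i => NormedSpace.inclusionInDoubleDualLi 𝕜 (a i))
    fun μ => (h μ).imp fun _ hC i => hC (mem_range_self i)
  exact ⟨C, fun i => ((NormedSpace.inclusionInDoubleDualLi 𝕜).norm_map _).symm.le.trans (hC i)⟩

theorem tendsto_dual_apply_zero_of_forall_norm_sum_smul_le {E : Type*} [NormedAddCommGroup E]
    [NormedSpace ℝ E] {x : ℕ → E} {C : ℝ}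
    (h : ∀ (I : Finset ℕ) (ε : ℕ → ℝ), (∀ i, |ε i| ≤ 1) → ‖∑ i ∈ I, ε i • x i‖ ≤ C)
    (μ : StrongDual ℝ E) : Tendsto (fun n => μ (x n)) atTop (𝓝 0) := by
  have hsum (I : Finset ℕ) : ∑ i ∈ I, |μ (x i)| ≤ ‖μ‖ * C :=
    calc ∑ i ∈ I, |μ (x i)| = μ (∑ i ∈ I, (SignType.sign (μ (x i)) : ℝ) • x i) := by
          simp [map_sum, sign_mul_self]
      _ ≤ ‖μ‖ * ‖∑ i ∈ I, (SignType.sign (μ (x i)) : ℝ) • x i‖ :=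
          (Real.le_norm_self _).trans (μ.le_opNorm _)
      _ ≤ ‖μ‖ * C := by
          gcongr
          exact h I _ fun i => by cases SignType.sign (μ (x i)) <;> simp
  rw [tendsto_zero_iff_abs_tendsto_zero]
  exact (summable_of_sum_le (fun _ => abs_nonneg _) hsum).tendsto_atTop_zero

section Scattered

variable {X Y : Type*} [TopologicalSpace X] [TopologicalSpace Y] [CompactSpace X]

theorem exists_minimal_isClosed_image_eq [T1Space Y] {φ : X → Y} (hφ : Continuous φ)
    {D : Set Y} (hD : IsClosed D) (hDφ : D ⊆ range φ) :
    ∃ Q, Minimal (fun Q : Set X => IsClosed Q ∧ φ '' Q = D) Q := by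
  suffices hchain : ∀ c ⊆ {Q : Set X | IsClosed Q ∧ φ '' Q = D}, IsChain (· ⊆ ·) c →
      c.Nonempty → ∃ lb ∈ {Q : Set X | IsClosed Q ∧ φ '' Q = D}, ∀ Q ∈ c, lb ⊆ Q by
    obtain ⟨Q, -, hQ⟩ := zorn_superset_nonempty _ hchain (φ ⁻¹' D)
      ⟨hD.preimage hφ, image_preimage_eq_of_subset hDφ⟩
    exact ⟨Q, hQ⟩
  rintro c hc hchain ⟨Q₀, hQ₀⟩
  refine ⟨⋂₀ c, ⟨isClosed_sInter fun Q hQ => (hc hQ).1, ?_⟩, fun _ => sInter_subset_of_mem⟩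
  refine ((image_mono (sInter_subset_of_mem hQ₀)).trans (hc hQ₀).2.le).antisymm fun d hd => ?_
  have : Nonempty c := ⟨⟨Q₀, hQ₀⟩⟩
  -- Cantor's intersection theorem for the fibres over `d` of the members of the chain
  obtain ⟨x, hx⟩ := IsCompact.nonempty_iInter_of_directed_nonempty_isCompact_isClosed
    (fun Q : c => (Q : Set X) ∩ φ ⁻¹' {d})
    (fun Q₁ Q₂ => (hchain.total Q₁.2 Q₂.2).elim
      (fun h => ⟨Q₁, subset_rfl, inter_subset_inter_left _ h⟩)
      (fun h => ⟨Q₂, inter_subset_inter_left _ h, subset_rfl⟩))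
    (fun Q => by obtain ⟨x, hx, rfl⟩ := (hc Q.2).2.symm ▸ hd; exact ⟨x, hx, rfl⟩)
    (fun Q => ((hc Q.2).1.inter (isClosed_singleton.preimage hφ)).isCompact)
    (fun Q => (hc Q.2).1.inter (isClosed_singleton.preimage hφ))
  simp only [mem_iInter, mem_inter_iff, mem_preimage, mem_singleton_iff] at hx
  exact ⟨x, fun Q hQ => (hx ⟨Q, hQ⟩).1, (hx ⟨Q₀, hQ₀⟩).2⟩

theorem Scattered.not_perfect_subset_range [T2Space Y] (hX : Scattered X) {φ : X → Y}
    (hφ : Continuous φ) {D : Set Y} (hD : Perfect D) (hne : D.Nonempty) : ¬ D ⊆ range φ := by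
  intro hDφ
  obtain ⟨Q, ⟨hQ, hQD⟩, hQmin⟩ := exists_minimal_isClosed_image_eq hφ hD.closed hDφ
  obtain ⟨q, hqQ, U, hU, hUQ⟩ := hX Q (by simpa [← hQD] using hne)
  have hQq : Q \ {q} = Q \ U := by
    rw [← hUQ, sdiff_inter_self_eq_sdiff]
  set Z := φ '' (Q \ {q})
  have hZ : IsClosed Z := by
    simpa only [Z, hQq] using ((hQ.sdiff hU).isCompact.image hφ).isClosed
  have hDZ : D ⊆ insert (φ q) Z := by
    rw [← hQD]
    rintro _ ⟨x, hx, rfl⟩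
    rcases eq_or_ne x q with rfl | hxq
    · exact mem_insert _ _
    · exact mem_insert_of_mem _ ⟨x, ⟨hx, hxq⟩, rfl⟩
  -- by minimality of `Q`, removing `q` makes the image smaller
  have hqZ : φ q ∉ Z := fun h => by
    have hZD : Z = D := (image_mono sdiff_subset).trans hQD.le |>.antisymm
      (hDZ.trans (insert_subset h subset_rfl))
    exact (hQmin ⟨hQq ▸ hQ.sdiff hU, hZD⟩ sdiff_subset hqQ).2 rfl
  obtain ⟨y, ⟨hyZ, hyD⟩, hyq⟩ := accPt_iff_nhds.1 (hD.acc _ (hQD ▸ mem_image_of_mem φ hqQ)) Zᶜ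
    (hZ.isOpen_compl.mem_nhds hqZ)
  exact hyZ ((hDZ hyD).resolve_left hyq)

theorem Scattered.countable_range [T2Space Y] [SecondCountableTopology Y] (hX : Scattered X)
    {φ : X → Y} (hφ : Continuous φ) : (range φ).Countable := by
  obtain ⟨V, D, hV, hD, hrange⟩ :=
    exists_countable_union_perfect_of_isClosed (isCompact_range hφ).isClosed
  rcases D.eq_empty_or_nonempty with rfl | hne
  · simpa [hrange] using hV
  · exact absurd (hrange ▸ subset_union_right) (hX.not_perfect_subset_range hφ hD hne)

end Scattered

theorem Scattered.exists_countable_forall_exists_eq {S : Type*} [TopologicalSpace S]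
    [CompactSpace S] (hS : Scattered S) {F : Set C(S, ℝ)} (hF : F.Countable) :
    ∃ D : Set S, D.Countable ∧ ∀ x, ∃ d ∈ D, ∀ f ∈ F, f x = f d := by
  have := hF.to_subtype
  let t : S → F → ℝ := fun x f => f.1 x
  have := (hS.countable_range (φ := t) (continuous_pi fun f => f.1.continuous)).to_subtype
  refine ⟨range (rangeSplitting t), Set.countable_range _, fun x => ?_⟩
  refine ⟨_, mem_range_self ⟨t x, mem_range_self x⟩, fun f hf => ?_⟩
  exact congrFun (apply_rangeSplitting t ⟨t x, mem_range_self x⟩).symm ⟨f, hf⟩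

theorem tendsto_pointwiseTopology_iff {S ι : Type*} [TopologicalSpace S] {l : Filter ι}
    {a : ι → C(S, ℝ)} {g : C(S, ℝ)} :
    Tendsto a l (@nhds _ (pointwiseTopology S) g) ↔ ∀ x, Tendsto (fun i => a i x) l (𝓝 (g x)) := by
  rw [pointwiseTopology, nhds_induced, tendsto_comap_iff, tendsto_pi_nhds]
  rfl

theorem Scattered.frechetUrysohnOnCountableSets_pointwiseTopology {S : Type*}
    [TopologicalSpace S] [CompactSpace S] (hS : Scattered S) :
    FrechetUrysohnOnCountableSets (pointwiseTopology S) := by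
  let := pointwiseTopology S
  intro B hB g hg
  obtain ⟨D, hD, hDS⟩ := hS.exists_countable_forall_exists_eq (hB.insert g)
  have := hD.to_subtype
  let r : C(S, ℝ) → D → ℝ := fun f d => f d
  have hr : Continuous r :=
    continuous_pi fun d => (continuous_apply d.1).comp continuous_induced_dom
  obtain ⟨u, hu, hug⟩ := mem_closure_iff_seq_limit.1 (mem_closure_image (hr.continuousAt) hg)
  choose b hbB hbu using hu
  refine ⟨b, hbB, tendsto_pointwiseTopology_iff.2 fun x => ?_⟩
  obtain ⟨d, hd, hxd⟩ := hDS x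
  rw [hxd g (mem_insert g B)]
  have hbd := tendsto_pi_nhds.1 hug ⟨d, hd⟩
  simp only [← hbu, r] at hbd
  simpa only [hxd _ (mem_insert_of_mem g (hbB _))] using hbd

theorem exists_seq_pairwise_disjoint_isOpen_of_accPt {X : Type*} [TopologicalSpace X]
    [T2Space X] {x : X} (hx : AccPt x (𝓟 univ)) :
    ∃ (O : ℕ → Set X) (y : ℕ → X), (∀ n, IsOpen (O n)) ∧ (∀ n, y n ∈ O n) ∧
      Pairwise (Disjoint on O) := by
  have step (V : {V : Set X // IsOpen V ∧ x ∈ V}) : ∃ (W : Set X) (y : X)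
      (V' : {V : Set X // IsOpen V ∧ x ∈ V}), IsOpen W ∧ y ∈ W ∧ W ⊆ V.1 ∧ V'.1 ⊆ V.1 ∧
        Disjoint W V'.1 := by
    obtain ⟨V, hV, hxV⟩ := V
    obtain ⟨y, ⟨hyV, -⟩, hyx⟩ := accPt_iff_nhds.1 hx V (hV.mem_nhds hxV)
    obtain ⟨U, U', hU, hU', hyU, hxU', hUU'⟩ := t2_separation hyx
    exact ⟨U ∩ V, y, ⟨U' ∩ V, hU'.inter hV, hxU', hxV⟩, hU.inter hV, ⟨hyU, hyV⟩,
      inter_subset_right, inter_subset_right, hUU'.mono inter_subset_left inter_subset_left⟩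
  choose W y next hW hyW hWV hnextV hdisj using step
  let V (n : ℕ) := next^[n] ⟨univ, isOpen_univ, mem_univ x⟩
  have hVsucc (n : ℕ) : V (n + 1) = next (V n) := iterate_succ_apply' ..
  have hV : Antitone fun n => (V n).1 :=
    antitone_nat_of_succ_le fun n => hVsucc n ▸ hnextV (V n)
  refine ⟨fun n => W (V n), fun n => y (V n), fun n => hW _, fun n => hyW _, ?_⟩
  -- `W (V m)` is disjoint from `V (m + 1)`, which contains `W (V n)` for `n > m`
  have hlt {m n : ℕ} (hmn : m < n) : Disjoint (W (V m)) (W (V n)) :=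
    (hdisj (V m)).mono_right ((hWV (V n)).trans (hVsucc m ▸ hV hmn))
  intro m n hmn
  rcases hmn.lt_or_gt with h | h
  · exact hlt h
  · exact (hlt h).symm

structure DisjointBumps (K : Type*) [TopologicalSpace K] where
  f : ℕ → C(K, ℝ)
  y : ℕ → K
  f_y : ∀ n, f n (y n) = 1
  f_mem_Icc : ∀ n x, f n x ∈ Icc (0 : ℝ) 1
  pairwise_disjoint_support : Pairwise (Disjoint on fun n => support (f n))

theorem DisjointBumps.nonempty (K : Type*) [TopologicalSpace K] [CompactSpace K] [T2Space K]
    [Infinite K] : Nonempty (DisjointBumps K) := by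
  obtain ⟨x, -, hx⟩ :=
    isCompact_univ.isCountablyCompact.exists_accPt_of_infinite subset_rfl (infinite_univ (α := K))
  obtain ⟨O, y, hO, hyO, hdisj⟩ := exists_seq_pairwise_disjoint_isOpen_of_accPt hx
  have (n : ℕ) : ∃ f : C(K, ℝ), EqOn f 0 (O n)ᶜ ∧ EqOn f 1 {y n} ∧ ∀ x, f x ∈ Icc (0 : ℝ) 1 :=
    exists_continuous_zero_one_of_isClosed (hO n).isClosed_compl isClosed_singleton
      (disjoint_singleton_right.2 (not_not.2 (hyO n)))
  choose f hf0 hf1 hf01 using this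
  have hsupp (n : ℕ) : support (f n) ⊆ O n := support_subset_iff'.2 fun _ hx => hf0 n hx
  exact ⟨⟨f, y, fun n => hf1 n rfl, hf01, fun m n hmn => (hdisj hmn).mono (hsupp m) (hsupp n)⟩⟩

namespace DisjointBumps

variable {K : Type*} [TopologicalSpace K] (b : DisjointBumps K)

theorem apply_eq_zero_of_ne {m n : ℕ} {x : K} (hmn : m ≠ n) (hx : b.f n x ≠ 0) : b.f m x = 0 :=
  notMem_support.1 fun hm => Set.disjoint_left.1 (b.pairwise_disjoint_support hmn) hm hx

theorem apply_y_of_ne {m n : ℕ} (hmn : m ≠ n) : b.f m (b.y n) = 0 :=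
  b.apply_eq_zero_of_ne hmn (by simp [b.f_y])

theorem norm_sum_smul_le_one [CompactSpace K] (I : Finset ℕ) {ε : ℕ → ℝ} (hε : ∀ i, |ε i| ≤ 1) :
    ‖∑ i ∈ I, ε i • b.f i‖ ≤ 1 := by
  refine (ContinuousMap.norm_le _ zero_le_one).2 fun x => ?_
  simp only [ContinuousMap.coe_sum, ContinuousMap.coe_smul, Finset.sum_apply, Pi.smul_apply,
    smul_eq_mul, Real.norm_eq_abs]
  by_cases hx : ∃ i ∈ I, b.f i x ≠ 0
  · obtain ⟨i, hi, hx⟩ := hx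
    rw [Finset.sum_eq_single_of_mem i hi fun j _ hji => by
      rw [b.apply_eq_zero_of_ne hji hx, mul_zero], abs_mul]
    exact mul_le_one₀ (hε i) (abs_nonneg _)
      ((abs_of_nonneg (b.f_mem_Icc i x).1).le.trans (b.f_mem_Icc i x).2)
  · push Not at hx
    rw [Finset.sum_eq_zero fun i hi => by rw [hx i hi, mul_zero], abs_zero]
    exact zero_le_one

end DisjointBumps

section WeakTopology

variable {K : Type*} [TopologicalSpace K] [CompactSpace K]

theorem tendsto_weakTopology_iff {ι : Type*} {l : Filter ι} {a : ι → C(K, ℝ)} {g : C(K, ℝ)} :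
    Tendsto a l (@nhds _ (weakTopology K) g) ↔
      ∀ μ : StrongDual ℝ C(K, ℝ), Tendsto (fun i => μ (a i)) l (𝓝 (μ g)) := by
  rw [weakTopology, nhds_iInf, tendsto_iInf]
  simp only [nhds_induced, tendsto_comap_iff]
  rfl

namespace DisjointBumps

variable (b : DisjointBumps K)

theorem tendsto_dual_apply (μ : StrongDual ℝ C(K, ℝ)) :
    Tendsto (fun n => μ (b.f n)) atTop (𝓝 0) :=
  tendsto_dual_apply_zero_of_forall_norm_sum_smul_le (fun I _ hε => b.norm_sum_smul_le_one I hε) μ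

def pairSums : Set C(K, ℝ) :=
  (fun p : ℕ × ℕ => b.f p.1 + (p.1 : ℝ) • b.f p.2) '' {p | p.1 < p.2}

theorem zero_mem_closure_pairSums : (0 : C(K, ℝ)) ∈ closure[weakTopology K] b.pairSums := by
  let := weakTopology K
  have hf (n : ℕ) : b.f n ∈ closure b.pairSums :=
    mem_closure_of_tendsto (f := fun m => b.f n + (n : ℝ) • b.f m)
      (tendsto_weakTopology_iff.2 fun μ => by
        simpa using tendsto_const_nhds.add ((b.tendsto_dual_apply μ).const_mul (n : ℝ)))
      ((eventually_gt_atTop n).mono fun m hm => ⟨(n, m), hm, rfl⟩)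
  rw [← closure_closure]
  exact mem_closure_of_tendsto
    (tendsto_weakTopology_iff.2 fun μ => by simpa using b.tendsto_dual_apply μ)
    (Eventually.of_forall hf)

theorem zero_notMem_seqClosure_pairSums :
    (0 : C(K, ℝ)) ∉ @seqClosure _ (weakTopology K) b.pairSums := by
  rintro ⟨a, ha, ha0⟩
  rw [tendsto_weakTopology_iff] at ha0
  simp only [map_zero] at ha0
  choose p hp hpa using ha
  obtain ⟨C, hC⟩ := exists_norm_le_of_forall_bddAbove_dual fun μ =>
    (ha0 μ).norm.bddAbove_range
  -- `a k = f n + n • f m` with `n < m`, and evaluating at `y m` shows `n ≤ ‖a k‖`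
  have hn (k : ℕ) : ((p k).1 : ℝ) ≤ C := calc
    ((p k).1 : ℝ) ≤ a k (b.y (p k).2) := by
      rw [← hpa k]
      simp [b.f_y, (b.f_mem_Icc _ _).1]
    _ ≤ ‖a k‖ := (Real.le_norm_self _).trans (ContinuousMap.norm_coe_le_norm _ _)
    _ ≤ C := hC k
  obtain ⟨n₀, hn₀⟩ := (finite_Iic ⌊C⌋₊).exists_frequently_eq (l := atTop)
    fun k => mem_Iic.2 (Nat.le_floor (hn k))
  have hone : ∃ᶠ k in atTop, a k (b.y n₀) = 1 := hn₀.mono fun k hk => by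
    rw [← hpa k, ContinuousMap.add_apply, ContinuousMap.smul_apply, hk, b.f_y,
      b.apply_y_of_ne (hk ▸ show (p k).1 < (p k).2 from hp k).ne', smul_zero, add_zero]
  exact zero_ne_one (tendsto_nhds_unique_of_frequently_eq
    (ha0 (ContinuousMap.evalCLM (R := ℝ) (b.y n₀))) tendsto_const_nhds hone)

end DisjointBumps

theorem not_frechetUrysohnOnCountableSets_weakTopology (K : Type*) [TopologicalSpace K]
    [CompactSpace K] [T2Space K] [Infinite K] :
    ¬ FrechetUrysohnOnCountableSets (weakTopology K) := fun h =>
  let b := (DisjointBumps.nonempty K).some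
  b.zero_notMem_seqClosure_pairSums
    (h _ ((to_countable _).image _) b.zero_mem_closure_pairSums)

end WeakTopology

theorem statement15_general (K S : Type*)
    [TopologicalSpace K] [CompactSpace K] [T2Space K] [Infinite K]
    [TopologicalSpace S] [CompactSpace S]
    (hS : Scattered S) :
    IsEmpty (@Homeomorph C(K, ℝ) C(S, ℝ) (weakTopology K) (pointwiseTopology S)) :=
  ⟨fun e => not_frechetUrysohnOnCountableSets_weakTopology K
    (hS.frechetUrysohnOnCountableSets_pointwiseTopology.of_homeomorph
      (tX := weakTopology K) (tY := pointwiseTopology S) e)⟩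

/-- Let `K` be an infinite compact Hausdorff space and `S` an infinite scattered compact
Hausdorff space. Then `C_w(K)` and `C_p(S)` are not homeomorphic. -/
theorem statement15 (K S : Type*)
    [TopologicalSpace K] [CompactSpace K] [T2Space K] [Infinite K]
    [TopologicalSpace S] [CompactSpace S] [T2Space S] [Infinite S]
    (hS : Scattered S) :
    IsEmpty (@Homeomorph C(K, ℝ) C(S, ℝ) (weakTopology K) (pointwiseTopology S)) :=
  statement15_general K S hS
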